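/- Fix p ∈ [1,∞). Let μ₁, ν₁ ∈ P(X₁) and μ₂, ν₂ ∈ P(X₂), and let π ∈ Π(μ₁,μ₂) and σ ∈ Π(ν₁,ν₂). Then W_p(π,σ)^p ≥ W_p^p(μ₁,ν₁) + W_p^p(μ₂,ν₂), where on the left W_p is taken with respect to the metric d_p on X₁×X₂ and on the right with respect to the ℓ_p metrics on X₁ and X₂. Consequently, inf{W_p(π,σ) : σ ∈ Π(ν₁,ν₂)} ≥ (W_p^p(μ₁,ν₁) + W_p^p(μ₂,ν₂))^{1/p}. -/

import Mathlib

open MeasureTheory ProbabilityTheory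
open scoped ENNReal

noncomputable section

abbrev Vec (n : ℕ) : Type := Fin n → ℝ

/-- ℓ_p distance on ℝ^n. -/
def lpDist (p : ℝ) {n : ℕ} (x y : Vec n) : ℝ := (∑ i, |x i - y i| ^ p) ^ (1 / p)

/-- product metric d_p on ℝ^{d₁} × ℝ^{d₂}. -/
def prodDist (p : ℝ) {n m : ℕ} (x y : Vec n × Vec m) : ℝ :=
  (lpDist p x.1 y.1 ^ p + lpDist p x.2 y.2 ^ p) ^ (1 / p)

/-- γ is a coupling of α and β. -/
def IsCoupling {E : Type*} [MeasurableSpace E] (γ : Measure (E × E)) (α β : Measure E) : Prop :=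
  IsProbabilityMeasure γ ∧ γ.map Prod.fst = α ∧ γ.map Prod.snd = β

/-- p-Wasserstein distance (p < ∞) w.r.t. a cost/metric c. -/
def Wp {E : Type*} [MeasurableSpace E] (p : ℝ) (c : E → E → ℝ) (α β : Measure E) : ℝ :=
  sInf ((fun γ : Measure (E × E) => (∫ z, c z.1 z.2 ^ p ∂γ) ^ (1 / p)) '' {γ | IsCoupling γ α β})

/-- ∞-Wasserstein distance w.r.t. a cost/metric c. -/
def Winf {E : Type*} [MeasurableSpace E] (c : E → E → ℝ) (α β : Measure E) : ℝ :=
  sInf ((fun γ : Measure (E × E) => essSup (fun z => c z.1 z.2) γ) '' {γ | IsCoupling γ α β})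

/-- q-Wasserstein distance for q ∈ [1,∞]. -/
def Wq {E : Type*} [MeasurableSpace E] (q : ℝ≥0∞) (c : E → E → ℝ) (α β : Measure E) : ℝ :=
  if q = ∞ then Winf c α β else Wp q.toReal c α β

/-- μ is a Borel probability measure concentrated on X. -/
def ProbOn {E : Type*} [MeasurableSpace E] (μ : Measure E) (X : Set E) : Prop :=
  IsProbabilityMeasure μ ∧ μ Xᶜ = 0

/-- ρ is absolutely continuous with Lebesgue density bounded above and below by strictly
positive constants on X, and vanishing off X. -/
def NiceDensityOn {E : Type*} [MeasureSpace E] (ρ : Measure E) (X : Set E) : Prop :=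
  ∃ (f : E → ℝ≥0∞) (c₁ c₂ : ℝ≥0∞), 0 < c₁ ∧ c₂ < ∞ ∧ ρ = volume.withDensity f ∧
    (∀ x ∈ X, c₁ ≤ f x ∧ f x ≤ c₂) ∧ (∀ x ∉ X, f x = 0)

/-- T is an optimal transport map from α to β for W_p w.r.t. cost c. -/
def IsOptMap {E : Type*} [MeasurableSpace E] (p : ℝ) (c : E → E → ℝ) (α β : Measure E)
    (T : E → E) : Prop :=
  Measurable T ∧ α.map T = β ∧ (∫ x, c x (T x) ^ p ∂α) ^ (1 / p) = Wp p c α β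

/-- Π(μ₁, μ₂): couplings of μ₁ and μ₂. -/
def Pi2 {d₁ d₂ : ℕ} (μ₁ : Measure (Vec d₁)) (μ₂ : Measure (Vec d₂)) :
    Set (Measure (Vec d₁ × Vec d₂)) :=
  {π | IsProbabilityMeasure π ∧ π.map Prod.fst = μ₁ ∧ π.map Prod.snd = μ₂}

/-- S is a shadow of ρ onto Π(μ₁,μ₂) for the p-Wasserstein distance. -/
def IsShadow2 (p : ℝ) {d₁ d₂ : ℕ} (ρ : Measure (Vec d₁ × Vec d₂))
    (μ₁ : Measure (Vec d₁)) (μ₂ : Measure (Vec d₂)) (S : Measure (Vec d₁ × Vec d₂)) : Prop :=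
  ∃ (κ₁ : Kernel (Vec d₁) (Vec d₁)) (κ₂ : Kernel (Vec d₂) (Vec d₂)),
    IsMarkovKernel κ₁ ∧ IsMarkovKernel κ₂ ∧
    (∃ γ₁ : Measure (Vec d₁ × Vec d₁),
      (∀ A, MeasurableSet A → γ₁ A = ∫⁻ y, κ₁ y {x | (x, y) ∈ A} ∂(ρ.map Prod.fst)) ∧
      IsCoupling γ₁ μ₁ (ρ.map Prod.fst) ∧
      (∫ z, lpDist p z.1 z.2 ^ p ∂γ₁) ^ (1 / p) = Wp p (lpDist p) μ₁ (ρ.map Prod.fst)) ∧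
    (∃ γ₂ : Measure (Vec d₂ × Vec d₂),
      (∀ A, MeasurableSet A → γ₂ A = ∫⁻ y, κ₂ y {x | (x, y) ∈ A} ∂(ρ.map Prod.snd)) ∧
      IsCoupling γ₂ μ₂ (ρ.map Prod.snd) ∧
      (∫ z, lpDist p z.1 z.2 ^ p ∂γ₂) ^ (1 / p) = Wp p (lpDist p) μ₂ (ρ.map Prod.snd)) ∧
    (∀ A : Set (Vec d₁ × Vec d₂), MeasurableSet A →
      S A = ∫⁻ y, ((κ₁ y.1).prod (κ₂ y.2)) A ∂ρ)

/-- d_{X,p}: product metric on a K-fold product of Euclidean spaces. -/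
def piDist (p : ℝ) {K : ℕ} {d : Fin K → ℕ} (x y : (i : Fin K) → Vec (d i)) : ℝ :=
  (∑ i, lpDist p (x i) (y i) ^ p) ^ (1 / p)

/-- S is a shadow of ρ onto Π(μ₁,…,μ_K) for the p-Wasserstein distance. -/
def IsShadowK (p : ℝ) {K : ℕ} {d : Fin K → ℕ} (ρ : Measure ((i : Fin K) → Vec (d i)))
    (μ : (i : Fin K) → Measure (Vec (d i))) (S : Measure ((i : Fin K) → Vec (d i))) : Prop :=
  ∃ κ : (i : Fin K) → Kernel (Vec (d i)) (Vec (d i)),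
    (∀ i, IsMarkovKernel (κ i)) ∧
    (∀ i, ∃ γ : Measure (Vec (d i) × Vec (d i)),
      (∀ A, MeasurableSet A → γ A = ∫⁻ y, κ i y {x | (x, y) ∈ A} ∂(ρ.map fun z => z i)) ∧
      IsCoupling γ (μ i) (ρ.map fun z => z i) ∧
      (∫ z, lpDist p z.1 z.2 ^ p ∂γ) ^ (1 / p) = Wp p (lpDist p) (μ i) (ρ.map fun z => z i)) ∧
    (∀ A, MeasurableSet A → S A = ∫⁻ y, Measure.pi (fun i => κ i (y i)) A ∂ρ)


/-!
Any coupling `γ` of `π` and `σ` projects, on each factor, to a coupling of the corresponding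
marginals, and `d_p^p` is the sum of the two factor costs `‖·‖_p^p`. Hence `∫ d_p^p dγ` splits
into two transport costs, each at least the corresponding `W_p^p`; taking the infimum over `γ`
gives the first inequality, and the second follows by taking `p`-th roots. Compactness of `X₁`
and `X₂` is what makes the factor costs integrable, so that the integral really splits.
-/

section Coupling

variable {E F : Type*} [MeasurableSpace E] [MeasurableSpace F]

lemma isCoupling_prod (α β : Measure E) [IsProbabilityMeasure α] [IsProbabilityMeasure β] :
    IsCoupling (α.prod β) α β :=
  ⟨inferInstance, by simp, by simp⟩

lemma IsCoupling.map_prodMap {γ : Measure (E × E)} {α β : Measure E} (hγ : IsCoupling γ α β)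
    {f : E → F} (hf : Measurable f) : IsCoupling (γ.map (Prod.map f f)) (α.map f) (β.map f) := by
  obtain ⟨hγ, rfl, rfl⟩ := hγ
  refine ⟨Measure.isProbabilityMeasure_map (hf.prodMap hf).aemeasurable, ?_, ?_⟩
  · rw [Measure.map_map measurable_fst (hf.prodMap hf), Measure.map_map hf measurable_fst]; rfl
  · rw [Measure.map_map measurable_snd (hf.prodMap hf), Measure.map_map hf measurable_snd]; rfl

lemma IsCoupling.integrable_of_isCompact [TopologicalSpace E] [OpensMeasurableSpace E]
    [SecondCountableTopology E] {γ : Measure (E × E)} {α β : Measure E} (hγ : IsCoupling γ α β)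
    {f : E × E → ℝ} (hf : Continuous f) {X : Set E} (hX : IsCompact X) (hα : α Xᶜ = 0)
    (hβ : β Xᶜ = 0) : Integrable f γ := by
  have := hγ.1
  obtain ⟨C, hC⟩ := (hX.prod hX).exists_bound_of_continuousOn hf.continuousOn
  have hfst : ∀ᵐ z ∂γ, z.1 ∈ X := ae_iff.2 <| nonpos_iff_eq_zero.1 <|
    ((Measure.le_map_apply measurable_fst.aemeasurable Xᶜ).trans_eq (by rw [hγ.2.1, hα]))
  have hsnd : ∀ᵐ z ∂γ, z.2 ∈ X := ae_iff.2 <| nonpos_iff_eq_zero.1 <|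
    ((Measure.le_map_apply measurable_snd.aemeasurable Xᶜ).trans_eq (by rw [hγ.2.2, hβ]))
  refine (integrable_const C).mono' hf.aestronglyMeasurable ?_
  filter_upwards [hfst, hsnd] with z h₁ h₂ using hC z ⟨h₁, h₂⟩

end Coupling

section Wasserstein

variable {E : Type*} [MeasurableSpace E] {p : ℝ} {c : E → E → ℝ} {α β : Measure E}

lemma Wp_nonneg (hc : ∀ x y, 0 ≤ c x y) : 0 ≤ Wp p c α β :=
  Real.sInf_nonneg <| by
    rintro _ ⟨γ, -, rfl⟩
    exact Real.rpow_nonneg (integral_nonneg fun z => Real.rpow_nonneg (hc _ _) _) _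

lemma Wp_rpow_le_integral (hp : 0 < p) (hc : ∀ x y, 0 ≤ c x y) {γ : Measure (E × E)}
    (hγ : IsCoupling γ α β) : Wp p c α β ^ p ≤ ∫ z, c z.1 z.2 ^ p ∂γ := by
  have hint : 0 ≤ ∫ z, c z.1 z.2 ^ p ∂γ := integral_nonneg fun z => Real.rpow_nonneg (hc _ _) _
  have hle : Wp p c α β ≤ (∫ z, c z.1 z.2 ^ p ∂γ) ^ p⁻¹ := by
    refine csInf_le ⟨0, ?_⟩ ⟨γ, hγ, by rw [one_div]⟩
    rintro _ ⟨γ', -, rfl⟩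
    exact Real.rpow_nonneg (integral_nonneg fun z => Real.rpow_nonneg (hc _ _) _) _
  exact (Real.le_rpow_inv_iff_of_pos (Wp_nonneg hc) hint hp).1 hle

lemma le_Wp_rpow_of_forall_isCoupling (hp : 0 < p) {a : ℝ} (ha : 0 ≤ a)
    (hne : ∃ γ, IsCoupling γ α β) (h : ∀ γ, IsCoupling γ α β → a ≤ ∫ z, c z.1 z.2 ^ p ∂γ) :
    a ≤ Wp p c α β ^ p := by
  obtain ⟨γ₀, hγ₀⟩ := hne
  have : a ^ p⁻¹ ≤ Wp p c α β := by
    refine le_csInf ⟨_, γ₀, hγ₀, rfl⟩ ?_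
    rintro _ ⟨γ, hγ, rfl⟩
    rw [one_div]
    exact Real.rpow_le_rpow ha (h γ hγ) (inv_nonneg.2 hp.le)
  calc a = (a ^ p⁻¹) ^ p := (Real.rpow_inv_rpow ha hp.ne').symm
    _ ≤ Wp p c α β ^ p := Real.rpow_le_rpow (Real.rpow_nonneg ha _) this hp.le

end Wasserstein

section LpDist

variable {p : ℝ} {n m : ℕ}

lemma lpDist_nonneg (x y : Vec n) : 0 ≤ lpDist p x y :=
  Real.rpow_nonneg (Finset.sum_nonneg fun _ _ => Real.rpow_nonneg (abs_nonneg _) _) _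

lemma lpDist_rpow (hp : p ≠ 0) (x y : Vec n) : lpDist p x y ^ p = ∑ i, |x i - y i| ^ p := by
  rw [lpDist, one_div, Real.rpow_inv_rpow
    (Finset.sum_nonneg fun i _ => Real.rpow_nonneg (abs_nonneg _) _) hp]

lemma continuous_lpDist_rpow (hp : 0 < p) :
    Continuous fun z : Vec n × Vec n => lpDist p z.1 z.2 ^ p := by
  simp_rw [lpDist_rpow hp.ne']
  exact continuous_finsetSum _ fun i _ => (Real.continuous_rpow_const hp.le).comp
    (((continuous_apply i).comp continuous_fst).sub ((continuous_apply i).comp continuous_snd)).abs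

lemma prodDist_nonneg (x y : Vec n × Vec m) : 0 ≤ prodDist p x y :=
  Real.rpow_nonneg (add_nonneg (Real.rpow_nonneg (lpDist_nonneg _ _) _)
    (Real.rpow_nonneg (lpDist_nonneg _ _) _)) _

lemma prodDist_rpow (hp : p ≠ 0) (x y : Vec n × Vec m) :
    prodDist p x y ^ p = lpDist p x.1 y.1 ^ p + lpDist p x.2 y.2 ^ p := by
  rw [prodDist, one_div, Real.rpow_inv_rpow (add_nonneg (Real.rpow_nonneg (lpDist_nonneg _ _) _)
    (Real.rpow_nonneg (lpDist_nonneg _ _) _)) hp]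

end LpDist

lemma Wp_rpow_add_le_integral_prodDist {p : ℝ} (hp : 0 < p) {d₁ d₂ : ℕ} {X₁ : Set (Vec d₁)}
    {X₂ : Set (Vec d₂)} (hX₁ : IsCompact X₁) (hX₂ : IsCompact X₂) {μ₁ ν₁ : Measure (Vec d₁)}
    {μ₂ ν₂ : Measure (Vec d₂)} (hμ₁ : μ₁ X₁ᶜ = 0) (hν₁ : ν₁ X₁ᶜ = 0) (hμ₂ : μ₂ X₂ᶜ = 0)
    (hν₂ : ν₂ X₂ᶜ = 0) {π σ : Measure (Vec d₁ × Vec d₂)} (hπ : π ∈ Pi2 μ₁ μ₂)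
    (hσ : σ ∈ Pi2 ν₁ ν₂) {γ : Measure ((Vec d₁ × Vec d₂) × (Vec d₁ × Vec d₂))}
    (hγ : IsCoupling γ π σ) :
    Wp p (lpDist p) μ₁ ν₁ ^ p + Wp p (lpDist p) μ₂ ν₂ ^ p ≤ ∫ z, prodDist p z.1 z.2 ^ p ∂γ := by
  have hT₁ : Measurable (Prod.map Prod.fst Prod.fst :
      (Vec d₁ × Vec d₂) × (Vec d₁ × Vec d₂) → Vec d₁ × Vec d₁) := by fun_prop
  have hT₂ : Measurable (Prod.map Prod.snd Prod.snd :
      (Vec d₁ × Vec d₂) × (Vec d₁ × Vec d₂) → Vec d₂ × Vec d₂) := by fun_prop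
  have hγ₁ : IsCoupling (γ.map (Prod.map Prod.fst Prod.fst)) μ₁ ν₁ := by
    simpa only [hπ.2.1, hσ.2.1] using hγ.map_prodMap (f := Prod.fst) measurable_fst
  have hγ₂ : IsCoupling (γ.map (Prod.map Prod.snd Prod.snd)) μ₂ ν₂ := by
    simpa only [hπ.2.2, hσ.2.2] using hγ.map_prodMap (f := Prod.snd) measurable_snd
  have hi₁ := hγ₁.integrable_of_isCompact (continuous_lpDist_rpow hp) hX₁ hμ₁ hν₁
  have hi₂ := hγ₂.integrable_of_isCompact (continuous_lpDist_rpow hp) hX₂ hμ₂ hν₂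
  calc _ ≤ (∫ z, lpDist p z.1 z.2 ^ p ∂γ.map (Prod.map Prod.fst Prod.fst)) +
        ∫ z, lpDist p z.1 z.2 ^ p ∂γ.map (Prod.map Prod.snd Prod.snd) :=
        add_le_add (Wp_rpow_le_integral hp lpDist_nonneg hγ₁)
          (Wp_rpow_le_integral hp lpDist_nonneg hγ₂)
    _ = ∫ z, prodDist p z.1 z.2 ^ p ∂γ := by
      rw [integral_map hT₁.aemeasurable hi₁.1, integral_map hT₂.aemeasurable hi₂.1]
      simp only [prodDist_rpow hp.ne']
      exact (integral_add (hi₁.comp_measurable hT₁) (hi₂.comp_measurable hT₂)).symm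

/-- lower bound for the Wasserstein distance between couplings by the
marginal Wasserstein distances, and the resulting lower bound on the projection value. -/
theorem coupling_wasserstein_lower_bound
    (d₁ d₂ : ℕ) (X₁ : Set (Vec d₁)) (X₂ : Set (Vec d₂))
    (hX₁c : IsCompact X₁) (hX₂c : IsCompact X₂)
    (p : ℝ) (hp : 1 ≤ p)
    (μ₁ ν₁ : Measure (Vec d₁)) (μ₂ ν₂ : Measure (Vec d₂))
    (hμ₁ : ProbOn μ₁ X₁) (hν₁ : ProbOn ν₁ X₁) (hμ₂ : ProbOn μ₂ X₂) (hν₂ : ProbOn ν₂ X₂)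
    (π σ : Measure (Vec d₁ × Vec d₂)) (hπ : π ∈ Pi2 μ₁ μ₂) (hσ : σ ∈ Pi2 ν₁ ν₂) :
    Wp p (lpDist p) μ₁ ν₁ ^ p + Wp p (lpDist p) μ₂ ν₂ ^ p ≤ Wp p (prodDist p) π σ ^ p ∧
    (Wp p (lpDist p) μ₁ ν₁ ^ p + Wp p (lpDist p) μ₂ ν₂ ^ p) ^ (1 / p) ≤
      sInf ((fun σ' => Wp p (prodDist p) π σ') '' Pi2 ν₁ ν₂) := by
  have hp₀ : 0 < p := by linarith
  have hsum : 0 ≤ Wp p (lpDist p) μ₁ ν₁ ^ p + Wp p (lpDist p) μ₂ ν₂ ^ p :=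
    add_nonneg (Real.rpow_nonneg (Wp_nonneg lpDist_nonneg) _)
      (Real.rpow_nonneg (Wp_nonneg lpDist_nonneg) _)
  have hbound : ∀ σ' ∈ Pi2 ν₁ ν₂,
      Wp p (lpDist p) μ₁ ν₁ ^ p + Wp p (lpDist p) μ₂ ν₂ ^ p ≤ Wp p (prodDist p) π σ' ^ p := by
    intro σ' hσ'
    have := hπ.1
    have := hσ'.1
    exact le_Wp_rpow_of_forall_isCoupling hp₀ hsum ⟨_, isCoupling_prod π σ'⟩ fun γ hγ =>
      Wp_rpow_add_le_integral_prodDist hp₀ hX₁c hX₂c hμ₁.2 hν₁.2 hμ₂.2 hν₂.2 hπ hσ' hγ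
  refine ⟨hbound σ hσ, le_csInf ⟨_, σ, hσ, rfl⟩ ?_⟩
  rintro _ ⟨σ', hσ', rfl⟩
  rw [one_div, Real.rpow_inv_le_iff_of_pos hsum (Wp_nonneg prodDist_nonneg) hp₀]
  exact hbound σ' hσ'
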